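/- arXiv:2301.06006 — 2 statements merged into one kernel-verified Lean document; each statement's English description precedes it below -/
import Mathlib

section
/- Let M = M_⊥ ×_λ M_θ be a hemi-slant warped product submanifold of an lcK manifold (M̃^{2n}, J, g). Then for all lifted vector fields X ∈ L(M_⊥) and Z, W ∈ L(M_θ), one has g(h(Z,W), JX) = g(h(X,Z), FW) + (1/2) g(Z,W) g(JB, X), where B is the Lee vector field. -/
noncomputable section

/-- An abstract algebraic model of a hemi-slant warped product submanifold `M = M⊥ ×_λ Mθ` of a locally conformal Kähler manifold `(M̃, J, g)`, i.e. a hemi-slant submanifold locally expressed as a warped product of leaves `M⊥` of `D⊥` and `Mθ` of `Dθ`, warped by `λ : M⊥ → (0,∞)`.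

`A` plays the role of the commutative `ℝ`-algebra of smooth real valued functions on the
submanifold `M`, `T` is the `A`-module of tangent vector fields of `M`, and `N` is the
`A`-module of vector fields normal to `M` in the ambient locally conformal Kähler manifold
`(M̃, J, g)`; a vector field of `M̃` along `M` is a pair in `T × N`.  The structure records
the ambient metric `g`, the almost complex structure `J`, directional derivatives `D`, the
ambient Levi-Civita connection `∇̄ = nablaAmb` along `M` (whose tangential and normal parts
give the induced connection, the second fundamental form, the shape operator and the normal
connection via the Gauss and Weingarten formulas), the Lee vector field `B` (with Lee form
`ω = g(B, ·)`, which is closed), the fundamental lcK identity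
`∇̄_U (JV) = J ∇̄_U V + (1/2)(Θ(V) U − ω(V) JU − g(U,V) A + Ω(U,V) B)` (where `Θ = ω ∘ J`,
`A = −J B`, `Ω = g(J·,·)`), and the hemi-slant data: the orthogonal complementary
distributions `D⊥` (totally real) and `Dθ` (slant with slant angle `θ ≠ 0, π/2`). -/
structure HemiSlantWarpedProduct (A : Type*) [CommRing A] [Algebra ℝ A]
    (T : Type*) [AddCommGroup T] [Module A T]
    (N : Type*) [AddCommGroup N] [Module A N] where
  /-- the ambient metric evaluated on vector fields along `M` -/
  g : T × N → T × N → A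
  g_symm : ∀ u v, g u v = g v u
  g_add_left : ∀ u v w, g (u + v) w = g u w + g v w
  g_smul_left : ∀ (a : A) (u v : T × N), g (a • u) v = a * g u v
  /-- tangential and normal fields are orthogonal -/
  g_tangent_normal : ∀ (X : T) (ξ : N), g (X, 0) (0, ξ) = 0
  /-- the ambient almost complex structure along `M` -/
  J : T × N →ₗ[A] T × N
  J_sq : ∀ u, J (J u) = -u
  J_isometry : ∀ u v, g (J u) (J v) = g u v
  /-- directional derivative of functions on `M` along tangent fields -/
  D : T → A → A
  D_add_vec : ∀ X Y a, D (X + Y) a = D X a + D Y a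
  D_smul_vec : ∀ (b : A) (X : T) (a : A), D (b • X) a = b * D X a
  D_add : ∀ X a b, D X (a + b) = D X a + D X b
  D_mul : ∀ X a b, D X (a * b) = a * D X b + b * D X a
  D_const : ∀ (X : T) (r : ℝ), D X (algebraMap ℝ A r) = 0
  /-- the ambient Levi-Civita connection `∇̄` along `M` -/
  nablaAmb : T → T × N → T × N
  nablaAmb_add_vec : ∀ X Y u, nablaAmb (X + Y) u = nablaAmb X u + nablaAmb Y u
  nablaAmb_smul_vec : ∀ (a : A) (X : T) u, nablaAmb (a • X) u = a • nablaAmb X u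
  nablaAmb_add : ∀ X u v, nablaAmb X (u + v) = nablaAmb X u + nablaAmb X v
  nablaAmb_smul : ∀ (X : T) (a : A) u, nablaAmb X (a • u) = D X a • u + a • nablaAmb X u
  /-- `∇̄` is a metric connection -/
  nablaAmb_metric : ∀ X u v, D X (g u v) = g (nablaAmb X u) v + g u (nablaAmb X v)
  /-- the Lie bracket of tangent vector fields of `M` -/
  bracket : T → T → T
  /-- `∇̄` is torsion free (tangential part) -/
  torsion_free : ∀ X Y : T,
    (nablaAmb X (Y, (0 : N))).1 - (nablaAmb Y (X, (0 : N))).1 = bracket X Y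
  /-- the second fundamental form (normal part of `∇̄` on tangent fields) is symmetric -/
  h_symm : ∀ X Y : T, (nablaAmb X (Y, (0 : N))).2 = (nablaAmb Y (X, (0 : N))).2
  /-- the Lee vector field of the lcK structure, along `M` -/
  B : T × N
  /-- the Lee form `ω = g(B, ·)` is closed -/
  lee_closed : ∀ X Y : T,
    D X (g B (Y, (0 : N))) - D Y (g B (X, (0 : N))) = g B (bracket X Y, (0 : N))
  /-- the fundamental identity of a locally conformal Kähler manifold -/
  lck_identity : ∀ (X : T) (v : T × N),
    nablaAmb X (J v) = J (nablaAmb X v)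
      + algebraMap ℝ A (1 / 2) •
          (g B (J v) • ((X, 0) : T × N) - g B v • J (X, 0)
            + g ((X, 0) : T × N) v • J B + g (J ((X, 0) : T × N)) v • B)
  /-- the totally real distribution `D⊥` -/
  Dperp : Submodule A T
  /-- the slant distribution `Dθ` -/
  Dtheta : Submodule A T
  orthogonal : ∀ X ∈ Dperp, ∀ Z ∈ Dtheta, g (X, (0 : N)) (Z, (0 : N)) = 0
  complementary : IsCompl Dperp Dtheta
  /-- `D⊥` is totally real: `J D⊥ ⊆ T⊥M` -/
  totally_real : ∀ X ∈ Dperp, (J (X, (0 : N))).1 = 0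
  /-- the slant angle `θ`, with `θ ≠ 0, π/2` -/
  θ : ℝ
  theta_pos : 0 < θ
  theta_lt_half_pi : θ < Real.pi / 2
  /-- `Dθ` is slant with slant angle `θ`: `P² Z = −cos² θ • Z` -/
  slant : ∀ Z ∈ Dtheta,
    (J ((J (Z, (0 : N))).1, (0 : N))).1 = (-(algebraMap ℝ A (Real.cos θ ^ 2))) • Z
  P_mem_Dtheta : ∀ Z ∈ Dtheta, (J (Z, (0 : N))).1 ∈ Dtheta
  /-- the orthogonal projection of `TM` onto `D⊥` -/
  projPerp : T →ₗ[A] T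
  projPerp_mem : ∀ X, projPerp X ∈ Dperp
  projPerp_id : ∀ X ∈ Dperp, projPerp X = X
  projPerp_zero : ∀ Z ∈ Dtheta, projPerp Z = 0
  /-- the orthogonal projection of `TM` onto `Dθ` -/
  projTheta : T →ₗ[A] T
  projTheta_mem : ∀ X, projTheta X ∈ Dtheta
  projTheta_id : ∀ Z ∈ Dtheta, projTheta Z = Z
  projTheta_zero : ∀ X ∈ Dperp, projTheta X = 0
  /-- the set of lifts to `M = M⊥ ×_λ Mθ` of vector fields on the first factor `M⊥` -/
  Lperp : Set T
  /-- the set of lifts to `M = M⊥ ×_λ Mθ` of vector fields on the second factor `Mθ` -/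
  Ltheta : Set T
  Lperp_sub : ∀ X ∈ Lperp, X ∈ Dperp
  Ltheta_sub : ∀ Z ∈ Ltheta, Z ∈ Dtheta
  Lperp_span : Submodule.span A Lperp = Dperp
  Ltheta_span : Submodule.span A Ltheta = Dtheta
  /-- `ln λ`, where `λ : M⊥ → (0,∞)` is the warping function -/
  lnlam : A
  /-- `λ` is (the lift of) a function on the first factor `M⊥` -/
  lnlam_base : ∀ Z ∈ Ltheta, D Z lnlam = 0
  /-- the (lift of the) gradient vector field `grad (ln λ)` -/
  gradlnlam : T
  gradlnlam_spec : ∀ X : T, g (gradlnlam, (0 : N)) (X, (0 : N)) = D X lnlam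
  /-- the warped product identity `∇_X Z = ∇_Z X = X(ln λ) Z` -/
  warp_mixed : ∀ X ∈ Lperp, ∀ Z ∈ Ltheta,
    (nablaAmb X (Z, (0 : N))).1 = D X lnlam • Z ∧
      (nablaAmb Z (X, (0 : N))).1 = D X lnlam • Z
  /-- the leaves of `D⊥` are totally geodesic in `M` -/
  warp_perp_geodesic : ∀ X ∈ Lperp, ∀ Y ∈ Lperp, (nablaAmb X (Y, (0 : N))).1 ∈ Dperp
  /-- the leaves of `Dθ` are totally umbilic in `M` with mean curvature `−grad (ln λ)` -/
  warp_theta_umbilic : ∀ Z ∈ Ltheta, ∀ W ∈ Ltheta,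
    (nablaAmb Z (W, (0 : N))).1 + g (Z, (0 : N)) (W, (0 : N)) • gradlnlam ∈ Dtheta

namespace HemiSlantWarpedProduct

variable {A : Type*} [CommRing A] [Algebra ℝ A]
  {T : Type*} [AddCommGroup T] [Module A T]
  {N : Type*} [AddCommGroup N] [Module A N]

/-- The induced Levi-Civita connection `∇` of `M` (tangential part of the Gauss formula). -/
def nabla (S : HemiSlantWarpedProduct A T N) (X Y : T) : T := (S.nablaAmb X (Y, 0)).1

/-- The second fundamental form `h` of `M` in `M̃` (normal part of the Gauss formula). -/
def h (S : HemiSlantWarpedProduct A T N) (X Y : T) : N := (S.nablaAmb X (Y, 0)).2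

/-- The shape operator `𝔄_ξ` of `M` in `M̃` (Weingarten formula). -/
def shape (S : HemiSlantWarpedProduct A T N) (ξ : N) (X : T) : T := -(S.nablaAmb X (0, ξ)).1

/-- The normal connection `∇⊥` of `M` in `M̃` (Weingarten formula). -/
def nablaPerp (S : HemiSlantWarpedProduct A T N) (X : T) (ξ : N) : N := (S.nablaAmb X (0, ξ)).2

/-- The tangential part `P` of `J` on tangent vector fields. -/
def P (S : HemiSlantWarpedProduct A T N) (X : T) : T := (S.J (X, 0)).1

/-- The normal part `F` of `J` on tangent vector fields. -/
def F (S : HemiSlantWarpedProduct A T N) (X : T) : N := (S.J (X, 0)).2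

end HemiSlantWarpedProduct

namespace HemiSlantWarpedProduct

variable {A : Type*} [CommRing A] [Algebra ℝ A]
  {T : Type*} [AddCommGroup T] [Module A T]
  {N : Type*} [AddCommGroup N] [Module A N]
  (S : HemiSlantWarpedProduct A T N)

lemma g_zero_left (v : T × N) : S.g 0 v = 0 := by
  simpa using S.g_smul_left 0 0 v

lemma g_zero_right (u : T × N) : S.g u 0 = 0 := by
  rw [S.g_symm]; exact S.g_zero_left u

lemma g_add_right (u v w : T × N) : S.g u (v + w) = S.g u v + S.g u w := by
  rw [S.g_symm, S.g_add_left, S.g_symm u v, S.g_symm w u]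

lemma g_smul_right (a : A) (u v : T × N) : S.g u (a • v) = a * S.g u v := by
  rw [S.g_symm, S.g_smul_left, S.g_symm]

lemma g_neg_right (u v : T × N) : S.g u (-v) = -S.g u v := by
  rw [← neg_one_smul A v, S.g_smul_right]; ring

lemma g_sub_right (u v w : T × N) : S.g u (v - w) = S.g u v - S.g u w := by
  rw [sub_eq_add_neg, S.g_add_right, S.g_neg_right, sub_eq_add_neg]

lemma g_split (u v : T × N) :
    S.g u v = S.g (u.1, 0) (v.1, 0) + S.g (0, u.2) (0, v.2) := by
  obtain ⟨a, b⟩ := u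
  obtain ⟨c, d⟩ := v
  have h1 : ((a, b) : T × N) = (a, 0) + (0, b) := by ext <;> simp
  have h2 : ((c, d) : T × N) = (c, 0) + (0, d) := by ext <;> simp
  show S.g (a, b) (c, d) = S.g (a, 0) (c, 0) + S.g (0, b) (0, d)
  rw [h1, h2, S.g_add_left, S.g_add_right, S.g_add_right, S.g_tangent_normal,
    S.g_symm (0, b) (c, 0), S.g_tangent_normal]
  ring

lemma gJ_skew (u v : T × N) : S.g (S.J u) v = -S.g u (S.J v) := by
  have h := S.J_isometry u (S.J v)
  rw [S.J_sq, S.g_neg_right] at h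
  linear_combination -h

lemma D_zero (X : T) : S.D X 0 = 0 := by
  simpa using S.D_const X 0

lemma D_sub (X : T) (a b : A) : S.D X (a - b) = S.D X a - S.D X b := by
  have h := S.D_add X (a - b) b
  rw [sub_add_cancel] at h
  linear_combination -h

lemma nablaAmb_neg (X : T) (u : T × N) : S.nablaAmb X (-u) = -S.nablaAmb X u := by
  have h1 : S.D X (-1) = 0 := by
    simpa using S.D_const X (-1)
  have h := S.nablaAmb_smul X (-1 : A) u
  rw [h1] at h
  simpa using h

lemma nablaAmb_sub (X : T) (u v : T × N) :
    S.nablaAmb X (u - v) = S.nablaAmb X u - S.nablaAmb X v := by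
  rw [sub_eq_add_neg, S.nablaAmb_add, S.nablaAmb_neg, sub_eq_add_neg]

end HemiSlantWarpedProduct
namespace HemiSlantWarpedProduct

variable {A : Type*} [CommRing A] [Algebra ℝ A]
  {T : Type*} [AddCommGroup T] [Module A T]
  {N : Type*} [AddCommGroup N] [Module A N]
  (S : HemiSlantWarpedProduct A T N)

lemma J_pair (U : T) : S.J (U, 0) = (S.P U, S.F U) := rfl

lemma J_perp {X : T} (hX : X ∈ S.Dperp) : S.J (X, 0) = (0, S.F X) := by
  exact Prod.ext (S.totally_real X hX) rfl

/-- tangent-tangent pairing of a mixed pair kills the normal part, etc. -/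
lemma g_pair_tangent (u : T × N) (V : T) : S.g u (V, 0) = S.g (u.1, 0) (V, 0) := by
  rw [S.g_split u (V, 0)]
  simp [Prod.mk_zero_zero, S.g_zero_right]

lemma g_pair_normal (u : T × N) (ξ : N) : S.g u (0, ξ) = S.g (0, u.2) (0, ξ) := by
  rw [S.g_split u (0, ξ)]
  simp [Prod.mk_zero_zero, S.g_zero_right]

lemma gT_theta_perp {V X : T} (hV : V ∈ S.Dtheta) (hX : X ∈ S.Dperp) :
    S.g (V, 0) (X, (0 : N)) = 0 := by
  rw [S.g_symm]; exact S.orthogonal X hX V hV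

/-- P is skew-symmetric on tangent fields -/
lemma P_skew (U V : T) : S.g (S.P U, 0) (V, 0) = -S.g (U, 0) (S.P V, 0) := by
  have h := S.gJ_skew (U, 0) (V, 0)
  rw [S.g_symm (U,0) (S.J (V,0)), S.g_pair_tangent (S.J (U,0)) V,
    S.g_pair_tangent (S.J (V,0)) U, J_pair, J_pair] at h
  simpa [S.g_symm (S.P V, (0:N)) (U, 0)] using h

/-- g(JZ, X) = 0 for Z slant, X perp -/
lemma gJ_theta_perp {V X : T} (hV : V ∈ S.Dtheta) (hX : X ∈ S.Dperp) :
    S.g (S.J (V, 0)) (X, (0 : N)) = 0 := by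
  rw [S.g_pair_tangent, J_pair]
  exact S.gT_theta_perp (S.P_mem_Dtheta V hV) hX

/-- the tangential warped-product identity extended to all of `Dθ` by `A`-linearity -/
lemma E1 {X : T} (hX : X ∈ S.Lperp) :
    ∀ V ∈ S.Dtheta, (S.nablaAmb V (X, (0 : N))).1 = S.D X S.lnlam • V := by
  intro V hV
  rw [← S.Ltheta_span] at hV
  induction hV using Submodule.span_induction with
  | mem v hv => exact (S.warp_mixed X hX v hv).2
  | zero =>
      have h0 : S.nablaAmb 0 (X, (0:N)) = 0 := by
        have := S.nablaAmb_smul_vec 0 0 (X, (0:N))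
        simpa using this
      rw [h0]; simp
  | add v w hv hw ihv ihw =>
      rw [S.nablaAmb_add_vec, Prod.fst_add, ihv, ihw, smul_add]
  | smul a v hv ih =>
      rw [S.nablaAmb_smul_vec, Prod.smul_fst, ih, smul_comm]

end HemiSlantWarpedProduct
namespace HemiSlantWarpedProduct

variable {A : Type*} [CommRing A] [Algebra ℝ A]
  {T : Type*} [AddCommGroup T] [Module A T]
  {N : Type*} [AddCommGroup N] [Module A N]
  (S : HemiSlantWarpedProduct A T N)

omit [Algebra ℝ A] in
lemma pair_smul (a : A) (V : T) : ((a • V, (0 : N)) : T × N) = a • ((V, 0) : T × N) := by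
  ext <;> simp

lemma P_sq {W : T} (hW : W ∈ S.Dtheta) :
    S.P (S.P W) = (-(algebraMap ℝ A (Real.cos S.θ ^ 2))) • W := S.slant W hW

lemma gT_P_P {Z W : T} (hZ : Z ∈ S.Dtheta) (hW : W ∈ S.Dtheta) :
    S.g (S.P Z, 0) (S.P W, 0) = algebraMap ℝ A (Real.cos S.θ ^ 2) * S.g (Z, 0) (W, 0) := by
  rw [S.P_skew Z (S.P W), S.P_sq hW, pair_smul, S.g_smul_right]
  ring

lemma gN_F_F {Z W : T} (hZ : Z ∈ S.Dtheta) (hW : W ∈ S.Dtheta) :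
    S.g (0, S.F Z) (0, S.F W)
      = S.g (Z, 0) (W, 0) - algebraMap ℝ A (Real.cos S.θ ^ 2) * S.g (Z, 0) (W, 0) := by
  have h := S.J_isometry (Z, 0) (W, 0)
  rw [S.g_split (S.J (Z, 0)) (S.J (W, 0))] at h
  have h2 : S.g ((S.J ((Z,0) : T × N)).1, 0) ((S.J ((W,0) : T × N)).1, 0)
      = algebraMap ℝ A (Real.cos S.θ ^ 2) * S.g (Z, 0) (W, 0) := S.gT_P_P hZ hW
  rw [h2] at h
  have h3 : S.g (0, (S.J ((Z, 0) : T × N)).2) (0, (S.J ((W, 0) : T × N)).2)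
      = S.g (0, S.F Z) (0, S.F W) := rfl
  rw [h3] at h
  linear_combination h

lemma gN_F_perp {X W : T} (hX : X ∈ S.Dperp) (hW : W ∈ S.Dtheta) :
    S.g (0, S.F X) (0, S.F W) = 0 := by
  have h := S.J_isometry (X, 0) (W, 0)
  rw [S.J_perp hX, S.g_symm, S.g_pair_normal, S.orthogonal X hX W hW] at h
  rw [S.g_symm]
  exact h

lemma J_F (W : T) :
    S.J (0, S.F W) = -((W, 0) : T × N) - (S.P (S.P W), S.F (S.P W)) := by
  have h2 : S.J (S.P W, 0) + S.J (0, S.F W) = -((W, 0) : T × N) := by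
    rw [← map_add, show ((S.P W, (0:N)) + ((0:T), S.F W)) = S.J ((W, 0) : T × N) from by
      rw [S.J_pair]; ext <;> simp, S.J_sq]
  have h3 := eq_sub_of_add_eq' h2
  rw [h3, S.J_pair]

lemma identI {X Z W : T} (hX : X ∈ S.Lperp) (hZ : Z ∈ S.Dtheta) :
    S.g (0, S.h Z W) (S.J (X, 0)) =
      S.D X S.lnlam * S.g (S.P W, 0) (Z, 0) + S.g (0, S.h X Z) (0, S.F W)
      + algebraMap ℝ A (1/2) * (S.g (S.J S.B) (X, 0) * S.g (W, 0) (Z, 0))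
      + algebraMap ℝ A (1/2) * (S.g S.B (X, 0) * S.g (W, 0) (S.P Z, 0)) := by
  have hXp := S.Lperp_sub X hX
  have hJX := S.J_perp hXp
  have eA : S.g (S.nablaAmb Z (W, 0)) (S.J (X, 0)) = S.g (0, S.h Z W) (S.J (X, 0)) := by
    rw [hJX, S.g_pair_normal, S.g_pair_normal]
    rfl
  have h0 : S.g ((W, 0) : T × N) (S.J (X, 0)) = 0 := by
    rw [hJX]; exact S.g_tangent_normal W (S.F X)
  have eB : S.g (S.nablaAmb Z (W, 0)) (S.J (X, 0))
      = -S.g ((W, 0) : T × N) (S.nablaAmb Z (S.J (X, 0))) := by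
    have hm := S.nablaAmb_metric Z (W, 0) (S.J (X, 0))
    rw [h0, S.D_zero] at hm
    linear_combination -hm
  have f1 : S.g ((Z, 0) : T × N) ((X, 0) : T × N) = 0 := S.gT_theta_perp hZ hXp
  have f2 : S.g (S.J ((Z, 0) : T × N)) ((X, 0) : T × N) = 0 := S.gJ_theta_perp hZ hXp
  have f3 : S.g ((W, 0) : T × N) (S.J ((Z, 0) : T × N)) = S.g (W, 0) (S.P Z, 0) := by
    rw [S.g_symm, S.g_pair_tangent, S.g_symm]
    rfl
  have f5 : S.g S.B (S.J ((X, 0) : T × N)) = -S.g (S.J S.B) ((X, 0) : T × N) := by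
    have h := S.gJ_skew S.B (X, 0)
    linear_combination h
  have f4 : S.g ((W, 0) : T × N) (S.J (S.nablaAmb Z (X, 0)))
      = -(S.D X S.lnlam * S.g (S.P W, 0) (Z, 0) + S.g (0, S.h X Z) (0, S.F W)) := by
    have hs := S.gJ_skew (W, 0) (S.nablaAmb Z (X, 0))
    have hsplit : S.g (S.J ((W, 0) : T × N)) (S.nablaAmb Z (X, 0))
        = S.g (S.P W, 0) ((S.nablaAmb Z (X, 0)).1, 0)
          + S.g (0, S.F W) (0, (S.nablaAmb Z (X, 0)).2) := by
      rw [S.g_split]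
      rfl
    have htang : (S.nablaAmb Z (X, 0)).1 = S.D X S.lnlam • Z := S.E1 hX Z hZ
    have hnorm : (S.nablaAmb Z (X, 0)).2 = S.h X Z := S.h_symm Z X
    rw [htang, hnorm, pair_smul, S.g_smul_right,
      S.g_symm ((0 : T), S.F W) ((0 : T), S.h X Z)] at hsplit
    linear_combination hs - hsplit
  have hl := S.lck_identity Z ((X, 0) : T × N)
  rw [← eA, eB, hl]
  simp only [S.g_add_right, S.g_sub_right, S.g_smul_right]
  rw [f1, f2, f3, f4, f5]
  ring

end HemiSlantWarpedProduct
namespace HemiSlantWarpedProduct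

variable {A : Type*} [CommRing A] [Algebra ℝ A]
  {T : Type*} [AddCommGroup T] [Module A T]
  {N : Type*} [AddCommGroup N] [Module A N]
  (S : HemiSlantWarpedProduct A T N)

lemma half_two : algebraMap ℝ A (1 / 2) * 2 = 1 := by
  rw [← map_ofNat (algebraMap ℝ A) 2, ← map_mul]
  norm_num

lemma g_sub_left (u v w : T × N) : S.g (u - v) w = S.g u w - S.g v w := by
  rw [S.g_symm, S.g_sub_right, S.g_symm w u, S.g_symm w v]

lemma star {X Z W : T} (hX : X ∈ S.Lperp) (hZ : Z ∈ S.Dtheta) (hW : W ∈ S.Dtheta) :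
    S.g (0, S.h X Z) (0, S.F W) - S.g (0, S.h X W) (0, S.F Z)
      = (2 * S.D X S.lnlam - S.g S.B (X, 0)) * S.g (S.P Z, 0) (W, 0) := by
  have e1 := S.identI (W := W) hX hZ
  have e2 := S.identI (W := Z) hX hW
  have hsym : S.g ((0 : T), S.h Z W) (S.J (X, 0)) = S.g (0, S.h W Z) (S.J (X, 0)) := by
    rw [show S.h Z W = S.h W Z from S.h_symm Z W]
  have hq : S.g ((Z, 0) : T × N) (S.P W, 0) = -S.g (S.P Z, 0) (W, 0) := by
    have := S.P_skew Z W
    linear_combination this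
  rw [S.P_skew W Z, S.g_symm ((W, (0 : N))) ((S.P Z, (0 : N))),
    S.g_symm ((W, (0 : N))) ((Z, (0 : N)))] at e1
  rw [hq] at e2
  linear_combination e2 - e1 + hsym
    - (S.g S.B (X, 0) * S.g (S.P Z, 0) (W, 0)) * half_two (A := A)

end HemiSlantWarpedProduct
namespace HemiSlantWarpedProduct

variable {A : Type*} [CommRing A] [Algebra ℝ A]
  {T : Type*} [AddCommGroup T] [Module A T]
  {N : Type*} [AddCommGroup N] [Module A N]
  (S : HemiSlantWarpedProduct A T N)

lemma D_algebraMap_mul (X : T) (r : ℝ) (a : A) :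
    S.D X (algebraMap ℝ A r * a) = algebraMap ℝ A r * S.D X a := by
  rw [S.D_mul, S.D_const]; ring

/-- `g(∇̄_X Z, W) = X(lnλ) g(Z,W)` for `X ∈ L⊥`, `Z` a lift in `Lθ`, any `W`. -/
lemma w_tang {X Z : T} (hX : X ∈ S.Lperp) (hZ : Z ∈ S.Ltheta) (W : T) :
    S.g (S.nablaAmb X ((Z, (0 : N)) : T × N)) ((W, (0 : N)) : T × N)
      = S.D X S.lnlam * S.g (Z, 0) (W, 0) := by
  rw [S.g_pair_tangent, (S.warp_mixed X hX Z hZ).1, pair_smul, S.g_smul_left]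

/-- the key computation: `g(∇̄_X (FV), FU)` for lifts `V, U ∈ Lθ`. -/
lemma identKey {X V U : T} (hX : X ∈ S.Lperp) (hV : V ∈ S.Ltheta) (hU : U ∈ S.Ltheta) :
    S.g (S.nablaAmb X ((0 : T), S.F V)) ((0 : T), S.F U)
      = S.D X S.lnlam * S.g (V, 0) (U, 0)
        - algebraMap ℝ A (Real.cos S.θ ^ 2) * (S.D X S.lnlam * S.g (V, 0) (U, 0))
        + S.g (0, S.h X V) (0, S.F (S.P U)) - S.g (0, S.h X (S.P V)) (0, S.F U) := by
  have hXp := S.Lperp_sub X hX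
  have hVt := S.Ltheta_sub V hV
  have hUt := S.Ltheta_sub U hU
  -- decompose (0, FV) = J(V,0) - (PV, 0)
  have hdec : (((0 : T), S.F V) : T × N) = S.J (V, 0) - ((S.P V, 0) : T × N) := by
    rw [S.J_pair]; ext <;> simp
  -- the (PV,0) part
  have w0 : S.g (S.nablaAmb X ((S.P V, (0 : N)) : T × N)) ((0 : T), S.F U)
      = S.g (0, S.h X (S.P V)) (0, S.F U) := by
    rw [S.g_pair_normal]
    rfl
  -- pieces for the J(V,0) part
  have w1 := S.w_tang hX hV U
  have hP2 : S.P (S.P U) = (-(algebraMap ℝ A (Real.cos S.θ ^ 2))) • U := S.P_sq hUt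
  have w2 : S.g (S.nablaAmb X ((V, (0 : N)) : T × N)) ((S.P (S.P U), S.F (S.P U)) : T × N)
      = -(algebraMap ℝ A (Real.cos S.θ ^ 2)) * (S.D X S.lnlam * S.g (V, 0) (U, 0))
        + S.g (0, S.h X V) (0, S.F (S.P U)) := by
    have hdec2 : ((S.P (S.P U), S.F (S.P U)) : T × N)
        = ((S.P (S.P U), 0) : T × N) + ((0 : T), S.F (S.P U)) := by ext <;> simp
    rw [hdec2, S.g_add_right, S.g_pair_normal]
    have hfst : S.g (S.nablaAmb X ((V, (0 : N)) : T × N)) ((S.P (S.P U), (0 : N)) : T × N)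
        = -(algebraMap ℝ A (Real.cos S.θ ^ 2)) * (S.D X S.lnlam * S.g (V, 0) (U, 0)) := by
      rw [S.g_pair_tangent, (S.warp_mixed X hX V hV).1, pair_smul, S.g_smul_left, hP2,
        pair_smul, S.g_smul_right]
      ring
    have hsnd : ((S.nablaAmb X ((V, (0 : N)) : T × N)).2 : N) = S.h X V := rfl
    rw [hfst, hsnd]
  -- g(J ∇̄_X (V,0), FU)
  have w3 : S.g (S.J (S.nablaAmb X ((V, (0 : N)) : T × N))) ((0 : T), S.F U)
      = S.D X S.lnlam * S.g (V, 0) (U, 0)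
        - algebraMap ℝ A (Real.cos S.θ ^ 2) * (S.D X S.lnlam * S.g (V, 0) (U, 0))
        + S.g (0, S.h X V) (0, S.F (S.P U)) := by
    rw [S.gJ_skew, S.J_F U, S.g_sub_right, S.g_neg_right, w1, w2]
    ring
  -- vanishing lcK correction coefficients
  have k1 : S.g ((X, (0 : N)) : T × N) ((0 : T), S.F U) = 0 := S.g_tangent_normal X (S.F U)
  have k2 : S.g (S.J ((X, (0 : N)) : T × N)) ((0 : T), S.F U) = 0 := by
    rw [S.J_perp hXp]; exact S.gN_F_perp hXp hUt
  have k3 : S.g ((X, (0 : N)) : T × N) ((V, (0 : N)) : T × N) = 0 := S.orthogonal X hXp V hVt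
  have k4 : S.g (S.J ((X, (0 : N)) : T × N)) ((V, (0 : N)) : T × N) = 0 := by
    rw [S.J_perp hXp, S.g_symm]; exact S.g_tangent_normal V (S.F X)
  -- the lcK identity in direction X applied to (V,0)
  have hl := S.lck_identity X ((V, (0 : N)) : T × N)
  have w4 : S.g (S.nablaAmb X (S.J ((V, (0 : N)) : T × N))) ((0 : T), S.F U)
      = S.D X S.lnlam * S.g (V, 0) (U, 0)
        - algebraMap ℝ A (Real.cos S.θ ^ 2) * (S.D X S.lnlam * S.g (V, 0) (U, 0))
        + S.g (0, S.h X V) (0, S.F (S.P U)) := by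
    rw [hl]
    simp only [S.g_add_left, S.g_sub_left, S.g_smul_left]
    rw [k1, k2, k3, k4, w3]
    ring
  rw [hdec, S.nablaAmb_sub, S.g_sub_left, w0, w4]

/-- identity (D): symmetry of the mixed `h`–`F` pairing under `P`. -/
lemma identD {X Z W : T} (hX : X ∈ S.Lperp) (hZ : Z ∈ S.Ltheta) (hW : W ∈ S.Ltheta) :
    S.g (0, S.h X Z) (0, S.F (S.P W)) + S.g (0, S.h X W) (0, S.F (S.P Z))
      = S.g (0, S.h X (S.P Z)) (0, S.F W) + S.g (0, S.h X (S.P W)) (0, S.F Z) := by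
  have hZt := S.Ltheta_sub Z hZ
  have hWt := S.Ltheta_sub W hW
  have k1 := S.identKey hX hZ hW
  have k2 := S.identKey hX hW hZ
  have hm := S.nablaAmb_metric X ((0 : T), S.F Z) ((0 : T), S.F W)
  have hflip : S.g (((0 : T), S.F Z) : T × N) (S.nablaAmb X ((0 : T), S.F W))
      = S.g (S.nablaAmb X ((0 : T), S.F W)) (((0 : T), S.F Z) : T × N) := S.g_symm _ _
  -- derivative of g(Z,W)
  have hDr : S.D X (S.g ((Z, (0 : N)) : T × N) ((W, (0 : N)) : T × N))
      = 2 * (S.D X S.lnlam * S.g (Z, 0) (W, 0)) := by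
    have hm2 := S.nablaAmb_metric X ((Z, (0 : N)) : T × N) ((W, (0 : N)) : T × N)
    have t1 := S.w_tang hX hZ W
    have t2 : S.g ((Z, (0 : N)) : T × N) (S.nablaAmb X ((W, (0 : N)) : T × N))
        = S.D X S.lnlam * S.g (Z, 0) (W, 0) := by
      rw [S.g_symm, S.w_tang hX hW Z, S.g_symm ((W, (0:N))) ((Z, (0:N)))]
    rw [t1, t2] at hm2
    linear_combination hm2
  -- way 1 for the derivative of g(FZ, FW)
  have way1 : S.D X (S.g (((0 : T), S.F Z) : T × N) (((0 : T), S.F W) : T × N))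
      = 2 * (S.D X S.lnlam * S.g (Z, 0) (W, 0))
        - algebraMap ℝ A (Real.cos S.θ ^ 2) * (2 * (S.D X S.lnlam * S.g (Z, 0) (W, 0))) := by
    rw [S.gN_F_F hZt hWt, S.D_sub, S.D_algebraMap_mul, hDr]
  have hsymZW : S.g ((W, (0 : N)) : T × N) ((Z, (0 : N)) : T × N)
      = S.g ((Z, (0 : N)) : T × N) ((W, (0 : N)) : T × N) := S.g_symm _ _
  rw [hflip, k1, k2, way1, hsymZW] at hm
  linear_combination -hm

end HemiSlantWarpedProduct
namespace HemiSlantWarpedProduct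

variable {A : Type*} [CommRing A] [Algebra ℝ A]
  {T : Type*} [AddCommGroup T] [Module A T]
  {N : Type*} [AddCommGroup N] [Module A N]
  (S : HemiSlantWarpedProduct A T N)

lemma cos_sq_ne : (2 * Real.cos S.θ ^ 2 : ℝ) ≠ 0 := by
  have hpos : 0 < Real.cos S.θ := Real.cos_pos_of_mem_Ioo
    ⟨by nlinarith [Real.pi_pos, S.theta_pos], S.theta_lt_half_pi⟩
  positivity

lemma k_vanish_lift {X Z W : T} (hX : X ∈ S.Lperp) (hZ : Z ∈ S.Ltheta) (hW : W ∈ S.Ltheta) :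
    (2 * S.D X S.lnlam - S.g S.B (X, 0)) * S.g ((Z, (0 : N)) : T × N) ((W, (0 : N)) : T × N)
      = 0 := by
  have hZt := S.Ltheta_sub Z hZ
  have hWt := S.Ltheta_sub W hW
  have hPZ : S.P Z ∈ S.Dtheta := S.P_mem_Dtheta Z hZt
  have hPW : S.P W ∈ S.Dtheta := S.P_mem_Dtheta W hWt
  have sA := S.star hX hZt hPW
  have sB := S.star hX hPZ hWt
  have hD := S.identD hX hZ hW
  have e1 : S.g (S.P Z, 0) (S.P W, 0)
      = algebraMap ℝ A (Real.cos S.θ ^ 2) * S.g (Z, 0) (W, 0) := S.gT_P_P hZt hWt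
  have e2 : S.g (S.P (S.P Z), 0) ((W, (0 : N)) : T × N)
      = -(algebraMap ℝ A (Real.cos S.θ ^ 2)) * S.g (Z, 0) (W, 0) := by
    rw [S.P_sq hZt, pair_smul, S.g_smul_left]
  rw [e1] at sA
  rw [e2] at sB
  -- from sA - sB and hD : 2 * c * (k * r) = 0
  have hE : algebraMap ℝ A (2 * Real.cos S.θ ^ 2)
      * ((2 * S.D X S.lnlam - S.g S.B (X, 0)) * S.g ((Z, (0:N)) : T × N) ((W, (0:N)) : T × N))
      = 0 := by
    have hmul : algebraMap ℝ A (2 * Real.cos S.θ ^ 2)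
        = 2 * algebraMap ℝ A (Real.cos S.θ ^ 2) := by
      rw [map_mul, map_ofNat]
    rw [hmul]
    linear_combination sB - sA + hD
  have hinv : algebraMap ℝ A ((2 * Real.cos S.θ ^ 2)⁻¹)
      * algebraMap ℝ A (2 * Real.cos S.θ ^ 2) = 1 := by
    rw [← map_mul, inv_mul_cancel₀ S.cos_sq_ne, map_one]
  calc (2 * S.D X S.lnlam - S.g S.B (X, 0)) * S.g ((Z, (0:N)) : T × N) ((W, (0:N)) : T × N)
      = algebraMap ℝ A ((2 * Real.cos S.θ ^ 2)⁻¹)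
        * (algebraMap ℝ A (2 * Real.cos S.θ ^ 2)
          * ((2 * S.D X S.lnlam - S.g S.B (X, 0))
            * S.g ((Z, (0:N)) : T × N) ((W, (0:N)) : T × N))) := by
        rw [← mul_assoc, hinv, one_mul]
    _ = 0 := by rw [hE, mul_zero]

lemma k_vanish {X : T} (hX : X ∈ S.Lperp) :
    ∀ Z ∈ S.Dtheta, ∀ W ∈ S.Dtheta,
      (2 * S.D X S.lnlam - S.g S.B (X, 0)) * S.g ((Z, (0 : N)) : T × N) ((W, (0 : N)) : T × N)
        = 0 := by
  have step1 : ∀ Z ∈ S.Ltheta, ∀ W ∈ S.Dtheta,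
      (2 * S.D X S.lnlam - S.g S.B (X, 0)) * S.g ((Z, (0:N)) : T × N) ((W, (0:N)) : T × N)
        = 0 := by
    intro Z hZ W hW
    rw [← S.Ltheta_span] at hW
    induction hW using Submodule.span_induction with
    | mem w hw => exact S.k_vanish_lift hX hZ hw
    | zero =>
        rw [show ((0 : T), (0 : N)) = (0 : T × N) from rfl, S.g_zero_right]; ring
    | add u v hu hv ihu ihv =>
        have hp : ((u + v, (0 : N)) : T × N) = (u, 0) + (v, 0) := by ext <;> simp
        rw [hp, S.g_add_right]
        linear_combination ihu + ihv
    | smul a u hu ih =>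
        rw [pair_smul, S.g_smul_right]
        linear_combination a * ih
  intro Z hZ W hW
  rw [← S.Ltheta_span] at hZ
  induction hZ using Submodule.span_induction with
  | mem z hz => exact step1 z hz W hW
  | zero =>
      rw [show ((0 : T), (0 : N)) = (0 : T × N) from rfl, S.g_zero_left]; ring
  | add u v hu hv ihu ihv =>
      have hp : ((u + v, (0 : N)) : T × N) = (u, 0) + (v, 0) := by ext <;> simp
      rw [hp, S.g_add_left]
      linear_combination ihu + ihv
  | smul a u hu ih =>
      rw [pair_smul, S.g_smul_left]
      linear_combination a * ih

end HemiSlantWarpedProduct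

/-- Let `M = M⊥ ×_λ Mθ` be a hemi-slant warped product submanifold of an lcK manifold. Then for all `X ∈ L(M⊥)` and `Z, W ∈ L(Mθ)`, `g(h(Z,W), JX) = g(h(X,Z), FW) + (1/2) g(Z,W) g(JB, X)`, where `B` is the Lee vector field. -/
theorem HemiSlantWarpedProduct.g_h_theta_theta_J {A : Type*} [CommRing A] [Algebra ℝ A]
    {T : Type*} [AddCommGroup T] [Module A T]
    {N : Type*} [AddCommGroup N] [Module A N]
    (S : HemiSlantWarpedProduct A T N) {X Z W : T}
    (hX : X ∈ S.Lperp) (hZ : Z ∈ S.Ltheta) (hW : W ∈ S.Ltheta) :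
    S.g (0, S.h Z W) (S.J (X, 0))
      = S.g (0, S.h X Z) (0, S.F W)
        + algebraMap ℝ A (1 / 2) * S.g (Z, 0) (W, 0) * S.g (S.J S.B) (X, 0) := by
  have hZt := S.Ltheta_sub Z hZ
  have hPZ : S.P Z ∈ S.Dtheta := S.P_mem_Dtheta Z hZt
  have hWt := S.Ltheta_sub W hW
  have e := S.identI (W := W) hX hZt
  have hk := S.k_vanish hX (S.P Z) hPZ W hWt
  rw [S.P_skew W Z, S.g_symm ((W, (0 : N))) ((S.P Z, (0 : N))),
    S.g_symm ((W, (0 : N))) ((Z, (0 : N)))] at e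
  linear_combination e - algebraMap ℝ A (1 / 2) * hk
    + (S.D X S.lnlam * S.g (S.P Z, 0) (W, 0)) * half_two (A := A)
end
end

section
/- Let M = M_θ ×_λ M_⊥ be a warped product hemi-slant submanifold of an lcK manifold (M̃^{2n}, J, g). Then for all lifted vector fields X ∈ L(M_⊥) and Z, W ∈ L(M_θ), one has g(h(Z,W), JX) = g(h(X,Z), FW) + (1/2) g(Z,W) g(JB, X), where B is the Lee vector field. -/
noncomputable section

/-- An abstract algebraic model of a warped product hemi-slant submanifold `M = Mθ ×_λ M⊥` of a locally conformal Kähler manifold `(M̃, J, g)`, i.e. a hemi-slant submanifold locally expressed as a warped product of leaves `Mθ` of `Dθ` and `M⊥` of `D⊥`, warped by `λ : Mθ → (0,∞)`.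

`A` plays the role of the commutative `ℝ`-algebra of smooth real valued functions on the
submanifold `M`, `T` is the `A`-module of tangent vector fields of `M`, and `N` is the
`A`-module of vector fields normal to `M` in the ambient locally conformal Kähler manifold
`(M̃, J, g)`; a vector field of `M̃` along `M` is a pair in `T × N`.  The structure records
the ambient metric `g`, the almost complex structure `J`, directional derivatives `D`, the
ambient Levi-Civita connection `∇̄ = nablaAmb` along `M` (whose tangential and normal parts
give the induced connection, the second fundamental form, the shape operator and the normal
connection via the Gauss and Weingarten formulas), the Lee vector field `B` (with Lee form
`ω = g(B, ·)`, which is closed), the fundamental lcK identity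
`∇̄_U (JV) = J ∇̄_U V + (1/2)(Θ(V) U − ω(V) JU − g(U,V) A + Ω(U,V) B)` (where `Θ = ω ∘ J`,
`A = −J B`, `Ω = g(J·,·)`), and the hemi-slant data: the orthogonal complementary
distributions `D⊥` (totally real) and `Dθ` (slant with slant angle `θ ≠ 0, π/2`). -/
structure WarpedProductHemiSlant (A : Type*) [CommRing A] [Algebra ℝ A]
    (T : Type*) [AddCommGroup T] [Module A T]
    (N : Type*) [AddCommGroup N] [Module A N] where
  /-- the ambient metric evaluated on vector fields along `M` -/
  g : T × N → T × N → A
  g_symm : ∀ u v, g u v = g v u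
  g_add_left : ∀ u v w, g (u + v) w = g u w + g v w
  g_smul_left : ∀ (a : A) (u v : T × N), g (a • u) v = a * g u v
  /-- tangential and normal fields are orthogonal -/
  g_tangent_normal : ∀ (X : T) (ξ : N), g (X, 0) (0, ξ) = 0
  /-- the ambient almost complex structure along `M` -/
  J : T × N →ₗ[A] T × N
  J_sq : ∀ u, J (J u) = -u
  J_isometry : ∀ u v, g (J u) (J v) = g u v
  /-- directional derivative of functions on `M` along tangent fields -/
  D : T → A → A
  D_add_vec : ∀ X Y a, D (X + Y) a = D X a + D Y a
  D_smul_vec : ∀ (b : A) (X : T) (a : A), D (b • X) a = b * D X a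
  D_add : ∀ X a b, D X (a + b) = D X a + D X b
  D_mul : ∀ X a b, D X (a * b) = a * D X b + b * D X a
  D_const : ∀ (X : T) (r : ℝ), D X (algebraMap ℝ A r) = 0
  /-- the ambient Levi-Civita connection `∇̄` along `M` -/
  nablaAmb : T → T × N → T × N
  nablaAmb_add_vec : ∀ X Y u, nablaAmb (X + Y) u = nablaAmb X u + nablaAmb Y u
  nablaAmb_smul_vec : ∀ (a : A) (X : T) u, nablaAmb (a • X) u = a • nablaAmb X u
  nablaAmb_add : ∀ X u v, nablaAmb X (u + v) = nablaAmb X u + nablaAmb X v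
  nablaAmb_smul : ∀ (X : T) (a : A) u, nablaAmb X (a • u) = D X a • u + a • nablaAmb X u
  /-- `∇̄` is a metric connection -/
  nablaAmb_metric : ∀ X u v, D X (g u v) = g (nablaAmb X u) v + g u (nablaAmb X v)
  /-- the Lie bracket of tangent vector fields of `M` -/
  bracket : T → T → T
  /-- `∇̄` is torsion free (tangential part) -/
  torsion_free : ∀ X Y : T,
    (nablaAmb X (Y, (0 : N))).1 - (nablaAmb Y (X, (0 : N))).1 = bracket X Y
  /-- the second fundamental form (normal part of `∇̄` on tangent fields) is symmetric -/
  h_symm : ∀ X Y : T, (nablaAmb X (Y, (0 : N))).2 = (nablaAmb Y (X, (0 : N))).2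
  /-- the Lee vector field of the lcK structure, along `M` -/
  B : T × N
  /-- the Lee form `ω = g(B, ·)` is closed -/
  lee_closed : ∀ X Y : T,
    D X (g B (Y, (0 : N))) - D Y (g B (X, (0 : N))) = g B (bracket X Y, (0 : N))
  /-- the fundamental identity of a locally conformal Kähler manifold -/
  lck_identity : ∀ (X : T) (v : T × N),
    nablaAmb X (J v) = J (nablaAmb X v)
      + algebraMap ℝ A (1 / 2) •
          (g B (J v) • ((X, 0) : T × N) - g B v • J (X, 0)
            + g ((X, 0) : T × N) v • J B + g (J ((X, 0) : T × N)) v • B)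
  /-- the totally real distribution `D⊥` -/
  Dperp : Submodule A T
  /-- the slant distribution `Dθ` -/
  Dtheta : Submodule A T
  orthogonal : ∀ X ∈ Dperp, ∀ Z ∈ Dtheta, g (X, (0 : N)) (Z, (0 : N)) = 0
  complementary : IsCompl Dperp Dtheta
  /-- `D⊥` is totally real: `J D⊥ ⊆ T⊥M` -/
  totally_real : ∀ X ∈ Dperp, (J (X, (0 : N))).1 = 0
  /-- the slant angle `θ`, with `θ ≠ 0, π/2` -/
  θ : ℝ
  theta_pos : 0 < θ
  theta_lt_half_pi : θ < Real.pi / 2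
  /-- `Dθ` is slant with slant angle `θ`: `P² Z = −cos² θ • Z` -/
  slant : ∀ Z ∈ Dtheta,
    (J ((J (Z, (0 : N))).1, (0 : N))).1 = (-(algebraMap ℝ A (Real.cos θ ^ 2))) • Z
  P_mem_Dtheta : ∀ Z ∈ Dtheta, (J (Z, (0 : N))).1 ∈ Dtheta
  /-- the orthogonal projection of `TM` onto `D⊥` -/
  projPerp : T →ₗ[A] T
  projPerp_mem : ∀ X, projPerp X ∈ Dperp
  projPerp_id : ∀ X ∈ Dperp, projPerp X = X
  projPerp_zero : ∀ Z ∈ Dtheta, projPerp Z = 0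
  /-- the orthogonal projection of `TM` onto `Dθ` -/
  projTheta : T →ₗ[A] T
  projTheta_mem : ∀ X, projTheta X ∈ Dtheta
  projTheta_id : ∀ Z ∈ Dtheta, projTheta Z = Z
  projTheta_zero : ∀ X ∈ Dperp, projTheta X = 0
  /-- the set of lifts to `M = Mθ ×_λ M⊥` of vector fields on the second factor `M⊥` -/
  Lperp : Set T
  /-- the set of lifts to `M = Mθ ×_λ M⊥` of vector fields on the first factor `Mθ` -/
  Ltheta : Set T
  Lperp_sub : ∀ X ∈ Lperp, X ∈ Dperp
  Ltheta_sub : ∀ Z ∈ Ltheta, Z ∈ Dtheta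
  Lperp_span : Submodule.span A Lperp = Dperp
  Ltheta_span : Submodule.span A Ltheta = Dtheta
  /-- `ln λ`, where `λ : Mθ → (0,∞)` is the warping function -/
  lnlam : A
  /-- `λ` is (the lift of) a function on the first factor `Mθ` -/
  lnlam_base : ∀ X ∈ Lperp, D X lnlam = 0
  /-- the (lift of the) gradient vector field `grad (ln λ)` -/
  gradlnlam : T
  gradlnlam_spec : ∀ X : T, g (gradlnlam, (0 : N)) (X, (0 : N)) = D X lnlam
  /-- the warped product identity `∇_X Z = ∇_Z X = Z(ln λ) X` -/
  warp_mixed : ∀ X ∈ Lperp, ∀ Z ∈ Ltheta,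
    (nablaAmb X (Z, (0 : N))).1 = D Z lnlam • X ∧
      (nablaAmb Z (X, (0 : N))).1 = D Z lnlam • X
  /-- the leaves of `Dθ` are totally geodesic in `M` -/
  warp_theta_geodesic : ∀ Z ∈ Ltheta, ∀ W ∈ Ltheta, (nablaAmb Z (W, (0 : N))).1 ∈ Dtheta
  /-- the leaves of `D⊥` are totally umbilic in `M` with mean curvature `−grad (ln λ)` -/
  warp_perp_umbilic : ∀ X ∈ Lperp, ∀ Y ∈ Lperp,
    (nablaAmb X (Y, (0 : N))).1 + g (X, (0 : N)) (Y, (0 : N)) • gradlnlam ∈ Dperp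

namespace WarpedProductHemiSlant

variable {A : Type*} [CommRing A] [Algebra ℝ A]
  {T : Type*} [AddCommGroup T] [Module A T]
  {N : Type*} [AddCommGroup N] [Module A N]

/-- The induced Levi-Civita connection `∇` of `M` (tangential part of the Gauss formula). -/
def nabla (S : WarpedProductHemiSlant A T N) (X Y : T) : T := (S.nablaAmb X (Y, 0)).1

/-- The second fundamental form `h` of `M` in `M̃` (normal part of the Gauss formula). -/
def h (S : WarpedProductHemiSlant A T N) (X Y : T) : N := (S.nablaAmb X (Y, 0)).2

/-- The shape operator `𝔄_ξ` of `M` in `M̃` (Weingarten formula). -/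
def shape (S : WarpedProductHemiSlant A T N) (ξ : N) (X : T) : T := -(S.nablaAmb X (0, ξ)).1

/-- The normal connection `∇⊥` of `M` in `M̃` (Weingarten formula). -/
def nablaPerp (S : WarpedProductHemiSlant A T N) (X : T) (ξ : N) : N := (S.nablaAmb X (0, ξ)).2

/-- The tangential part `P` of `J` on tangent vector fields. -/
def P (S : WarpedProductHemiSlant A T N) (X : T) : T := (S.J (X, 0)).1

/-- The normal part `F` of `J` on tangent vector fields. -/
def F (S : WarpedProductHemiSlant A T N) (X : T) : N := (S.J (X, 0)).2

end WarpedProductHemiSlant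

namespace WarpedProductHemiSlant

variable {A : Type*} [CommRing A] [Algebra ℝ A]
  {T : Type*} [AddCommGroup T] [Module A T]
  {N : Type*} [AddCommGroup N] [Module A N]
  (S : WarpedProductHemiSlant A T N)

lemma g_zero_left (v : T × N) : S.g 0 v = 0 := by
  simpa using S.g_smul_left 0 0 v

lemma g_zero_right (u : T × N) : S.g u 0 = 0 := by
  rw [S.g_symm]; exact S.g_zero_left u

lemma g_add_right (u v w : T × N) : S.g u (v + w) = S.g u v + S.g u w := by
  rw [S.g_symm, S.g_add_left, S.g_symm v u, S.g_symm w u]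

lemma g_smul_right (a : A) (u v : T × N) : S.g u (a • v) = a * S.g u v := by
  rw [S.g_symm, S.g_smul_left, S.g_symm v u]

lemma g_neg_left (u v : T × N) : S.g (-u) v = - S.g u v := by
  rw [← neg_one_smul A u, S.g_smul_left, neg_one_mul]

lemma g_neg_right (u v : T × N) : S.g u (-v) = - S.g u v := by
  rw [S.g_symm, S.g_neg_left, S.g_symm v u]

lemma g_sub_left (u w v : T × N) : S.g (u - w) v = S.g u v - S.g w v := by
  rw [sub_eq_add_neg, S.g_add_left, S.g_neg_left, ← sub_eq_add_neg]

lemma gJ_skew (u v : T × N) : S.g (S.J u) v = - S.g u (S.J v) := by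
  have h := S.J_isometry u (S.J v)
  rw [S.J_sq, S.g_neg_right] at h
  linear_combination -h

lemma g_pair (u v : T × N) :
    S.g u v = S.g (u.1, 0) (v.1, 0) + S.g (0, u.2) (0, v.2) := by
  have hu : u = ((u.1, 0) : T × N) + (0, u.2) := by
    rw [Prod.mk_add_mk, add_zero, zero_add]
  have hv : v = ((v.1, 0) : T × N) + (0, v.2) := by
    rw [Prod.mk_add_mk, add_zero, zero_add]
  calc S.g u v = S.g (((u.1, 0) : T × N) + (0, u.2)) (((v.1, 0) : T × N) + (0, v.2)) := by
        rw [← hu, ← hv]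
    _ = S.g (u.1, 0) (v.1, 0) + S.g (u.1, 0) (0, v.2)
        + (S.g (0, u.2) (v.1, 0) + S.g (0, u.2) (0, v.2)) := by
        rw [S.g_add_left, S.g_add_right, S.g_add_right]
    _ = _ := by
        rw [S.g_tangent_normal]
        rw [show S.g ((0 : T), u.2) (v.1, 0) = 0 from by
          rw [S.g_symm]; exact S.g_tangent_normal v.1 u.2]
        ring

lemma g_fst (x : T) (v : T × N) : S.g (x, 0) v = S.g (x, 0) (v.1, 0) := by
  rw [S.g_pair]
  show S.g (x, 0) (v.1, 0) + S.g (0 : T × N) ((0 : T), v.2) = S.g (x, 0) (v.1, 0)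
  rw [S.g_zero_left, add_zero]

lemma g_snd (ξ : N) (v : T × N) : S.g (0, ξ) v = S.g (0, ξ) (0, v.2) := by
  rw [S.g_pair]
  show S.g (0 : T × N) (v.1, 0) + S.g ((0 : T), ξ) (0, v.2) = S.g (0, ξ) (0, v.2)
  rw [S.g_zero_left, zero_add]

lemma D_zero (X : T) : S.D X 0 = 0 := by
  simpa using S.D_const X 0

lemma D_algmul (X : T) (r : ℝ) (a : A) :
    S.D X (algebraMap ℝ A r * a) = algebraMap ℝ A r * S.D X a := by
  rw [S.D_mul, S.D_const, mul_zero, add_zero]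

lemma nablaAmb_zero (X : T) : S.nablaAmb X (0 : T × N) = 0 := by
  have h := S.nablaAmb_smul X (0 : A) (0 : T × N)
  simpa using h

lemma h_zero (X : T) : S.h X 0 = 0 := by
  show (S.nablaAmb X ((0 : T), (0 : N))).2 = 0
  rw [show ((0 : T), (0 : N)) = (0 : T × N) from rfl, S.nablaAmb_zero]
  rfl

lemma h_add_right (X U V : T) : S.h X (U + V) = S.h X U + S.h X V := by
  show (S.nablaAmb X (U + V, 0)).2 = _
  rw [show ((U + V, 0) : T × N) = (U, 0) + (V, 0) from by
    rw [Prod.mk_add_mk, add_zero], S.nablaAmb_add]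
  rfl

lemma h_smul_right (X : T) (a : A) (U : T) : S.h X (a • U) = a • S.h X U := by
  show (S.nablaAmb X (a • U, 0)).2 = _
  rw [show ((a • U, 0) : T × N) = a • ((U, 0) : T × N) from by
    rw [Prod.smul_mk, smul_zero], S.nablaAmb_smul]
  show S.D X a • (0 : N) + a • (S.nablaAmb X (U, 0)).2 = _
  rw [smul_zero, zero_add]
  rfl

lemma F_zero : S.F (0 : T) = 0 := by
  show (S.J ((0 : T), (0 : N))).2 = 0
  rw [show ((0 : T), (0 : N)) = (0 : T × N) from rfl, map_zero]
  rfl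

lemma F_add (U V : T) : S.F (U + V) = S.F U + S.F V := by
  show (S.J (U + V, 0)).2 = _
  rw [show ((U + V, 0) : T × N) = (U, 0) + (V, 0) from by
    rw [Prod.mk_add_mk, add_zero], map_add]
  rfl

lemma F_smul (a : A) (U : T) : S.F (a • U) = a • S.F U := by
  show (S.J (a • U, 0)).2 = _
  rw [show ((a • U, 0) : T × N) = a • ((U, 0) : T × N) from by
    rw [Prod.smul_mk, smul_zero], map_smul]
  rfl

lemma JX_normal {X : T} (hX : X ∈ S.Dperp) : S.J ((X, 0) : T × N) = (0, S.F X) :=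
  Prod.ext (S.totally_real X hX) rfl

lemma g_JX_tan {X : T} (hX : X ∈ S.Dperp) (Y : T) :
    S.g (S.J ((X, 0) : T × N)) ((Y, 0) : T × N) = 0 := by
  rw [S.JX_normal hX, S.g_symm]
  exact S.g_tangent_normal Y (S.F X)

lemma g_smul_fst (a : A) (x : T) (v : T × N) :
    S.g (a • x, 0) v = a * S.g (x, 0) v := by
  rw [show ((a • x, 0) : T × N) = a • ((x, 0) : T × N) from by
    rw [Prod.smul_mk, smul_zero], S.g_smul_left]

lemma g_add_snd_left (a b : N) (v : T × N) :
    S.g (0, a + b) v = S.g (0, a) v + S.g (0, b) v := by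
  rw [show ((0, a + b) : T × N) = (0, a) + (0, b) from by
    rw [Prod.mk_add_mk, add_zero], S.g_add_left]

lemma g_smul_snd_left (r : A) (a : N) (v : T × N) :
    S.g (0, r • a) v = r * S.g (0, a) v := by
  rw [show ((0, r • a) : T × N) = r • ((0, a) : T × N) from by
    rw [Prod.smul_mk, smul_zero], S.g_smul_left]

lemma warp_nab_ZX {X Z : T} (hX : X ∈ S.Lperp) (hZ : Z ∈ S.Ltheta) :
    S.nablaAmb Z ((X, 0) : T × N) = (S.D Z S.lnlam • X, S.h Z X) :=
  Prod.ext ((S.warp_mixed X hX Z hZ).2) rfl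

lemma warp_nab_XZ {X Z : T} (hX : X ∈ S.Lperp) (hZ : Z ∈ S.Ltheta) :
    S.nablaAmb X ((Z, 0) : T × N) = (S.D Z S.lnlam • X, S.h X Z) :=
  Prod.ext ((S.warp_mixed X hX Z hZ).1) rfl

lemma lck_pair (Xv : T) (u v : T × N) :
    S.g (S.nablaAmb Xv (S.J u)) v
      = S.g (S.J (S.nablaAmb Xv u)) v
        + algebraMap ℝ A (1 / 2) *
          (S.g S.B (S.J u) * S.g ((Xv, 0) : T × N) v
            - S.g S.B u * S.g (S.J ((Xv, 0) : T × N)) v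
            + S.g ((Xv, 0) : T × N) u * S.g (S.J S.B) v
            + S.g (S.J ((Xv, 0) : T × N)) u * S.g S.B v) := by
  have e : ∀ p q r s : T × N,
      S.g (p - q + r + s) v = S.g p v - S.g q v + S.g r v + S.g s v := by
    intro p q r s
    rw [S.g_add_left, S.g_add_left, S.g_sub_left]
  rw [S.lck_identity Xv u, S.g_add_left, S.g_smul_left, e,
    S.g_smul_left, S.g_smul_left, S.g_smul_left, S.g_smul_left]

lemma eqA {X Z : T} (hX : X ∈ S.Lperp) (hZ : Z ∈ S.Ltheta) {W : T} (hW : W ∈ S.Dtheta) :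
    S.g (0, S.h Z W) (S.J (X, 0))
      = S.g (0, S.h Z X) (0, S.F W)
        + algebraMap ℝ A (1 / 2) *
          (S.g (S.J S.B) ((X, 0) : T × N) * S.g ((Z, 0) : T × N) ((W, 0) : T × N)
            + S.g S.B ((X, 0) : T × N) * S.g (S.J ((Z, 0) : T × N)) ((W, 0) : T × N)) := by
  have hXD := S.Lperp_sub X hX
  have hZD := S.Ltheta_sub Z hZ
  have z1 : S.g (S.J ((X, 0) : T × N)) ((W, 0) : T × N) = 0 := S.g_JX_tan hXD W
  have m := S.nablaAmb_metric Z (S.J ((X, 0) : T × N)) ((W, 0) : T × N)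
  rw [z1, S.D_zero] at m
  have e2 : S.g (S.J ((X, 0) : T × N)) (S.nablaAmb Z ((W, 0) : T × N))
      = S.g (0, S.h Z W) (S.J (X, 0)) := by
    rw [S.JX_normal hXD, S.g_snd, S.g_symm]
    rfl
  rw [e2] at m
  have lp := S.lck_pair Z ((X, 0) : T × N) ((W, 0) : T × N)
  have c3 : S.g ((Z, 0) : T × N) ((X, 0) : T × N) = 0 := by
    rw [S.g_symm]; exact S.orthogonal X hXD Z hZD
  have c4 : S.g (S.J ((Z, 0) : T × N)) ((X, 0) : T × N) = 0 := by
    rw [S.g_pair]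
    show S.g (S.P Z, 0) (X, 0) + S.g (0, S.F Z) ((0 : T), (0 : N)) = 0
    rw [show S.g (S.P Z, 0) (X, 0) = 0 from by
      rw [S.g_symm]; exact S.orthogonal X hXD (S.P Z) (S.P_mem_Dtheta Z hZD)]
    rw [show ((0 : T), (0 : N)) = (0 : T × N) from rfl, S.g_zero_right, add_zero]
  have c1 : S.g S.B (S.J ((X, 0) : T × N)) = - S.g (S.J S.B) ((X, 0) : T × N) := by
    have := S.gJ_skew S.B ((X, 0) : T × N)
    linear_combination this
  have e3 : S.g (S.J (S.nablaAmb Z ((X, 0) : T × N))) ((W, 0) : T × N)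
      = - S.g (0, S.h Z X) (0, S.F W) := by
    rw [S.gJ_skew, S.warp_nab_ZX hX hZ, S.g_pair]
    show -(S.g (S.D Z S.lnlam • X, 0) (S.P W, 0) + S.g (0, S.h Z X) (0, S.F W)) = _
    rw [S.g_smul_fst]
    rw [show S.g ((X, 0) : T × N) ((S.P W, 0) : T × N) = 0 from
      S.orthogonal X hXD (S.P W) (S.P_mem_Dtheta W hW)]
    ring
  rw [c1, c3, c4, e3] at lp
  rw [lp] at m
  linear_combination -m

lemma eqB {X Z W : T} (hX : X ∈ S.Lperp) (hZ : Z ∈ S.Ltheta) (hW : W ∈ S.Ltheta) :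
    S.g (0, S.h X Z) (0, S.F W) - S.g (0, S.h X W) (0, S.F Z)
      = -(S.g S.B ((X, 0) : T × N) * S.g (S.J ((Z, 0) : T × N)) ((W, 0) : T × N)) := by
  have ha := S.eqA hX hZ (S.Ltheta_sub W hW)
  have hb := S.eqA hX hW (S.Ltheta_sub Z hZ)
  have hsym : S.h Z W = S.h W Z := S.h_symm Z W
  have h1 : S.h Z X = S.h X Z := S.h_symm Z X
  have h2 : S.h W X = S.h X W := S.h_symm W X
  rw [hsym, h1] at ha
  rw [h2] at hb
  have hg : S.g ((W, 0) : T × N) ((Z, 0) : T × N) = S.g ((Z, 0) : T × N) ((W, 0) : T × N) :=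
    S.g_symm _ _
  have hq : S.g (S.J ((W, 0) : T × N)) ((Z, 0) : T × N)
      = - S.g (S.J ((Z, 0) : T × N)) ((W, 0) : T × N) := by
    rw [S.gJ_skew, S.g_symm]
  rw [hg, hq] at hb
  have hkk : algebraMap ℝ A (1 / 2) + algebraMap ℝ A (1 / 2) = 1 := by
    rw [← map_add]
    norm_num
  linear_combination hb - ha
    - (S.g S.B ((X, 0) : T × N) * S.g (S.J ((Z, 0) : T × N)) ((W, 0) : T × N)) * hkk

lemma eqB' {X : T} (hX : X ∈ S.Lperp) {U V : T} (hU : U ∈ S.Dtheta) (hV : V ∈ S.Ltheta) :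
    S.g (0, S.h X U) (0, S.F V) - S.g (0, S.h X V) (0, S.F U)
      = -(S.g S.B ((X, 0) : T × N) * S.g (S.J ((U, 0) : T × N)) ((V, 0) : T × N)) := by
  rw [← S.Ltheta_span] at hU
  induction hU using Submodule.span_induction with
  | mem x hx => exact S.eqB hX hx hV
  | zero =>
      rw [S.h_zero, S.F_zero]
      rw [show ((0 : T), (0 : N)) = (0 : T × N) from rfl, S.g_zero_left, S.g_zero_right,
        map_zero, S.g_zero_left]
      ring
  | add x y hx hy ihx ihy =>
      rw [S.h_add_right, S.F_add, S.g_add_snd_left,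
        show ((0 : T), S.F x + S.F y) = ((0, S.F x) : T × N) + (0, S.F y) from by
          rw [Prod.mk_add_mk, add_zero],
        S.g_add_right,
        show ((x + y, 0) : T × N) = (x, 0) + (y, 0) from by
          rw [Prod.mk_add_mk, add_zero],
        map_add, S.g_add_left]
      linear_combination ihx + ihy
  | smul a x hx ih =>
      rw [S.h_smul_right, S.F_smul, S.g_smul_snd_left,
        show ((0 : T), a • S.F x) = a • ((0, S.F x) : T × N) from by
          rw [Prod.smul_mk, smul_zero],
        S.g_smul_right,
        show ((a • x, 0) : T × N) = a • ((x, 0) : T × N) from by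
          rw [Prod.smul_mk, smul_zero],
        map_smul, S.g_smul_left]
      linear_combination a * ih

lemma L1 {X Z : T} (hX : X ∈ S.Lperp) (hZ : Z ∈ S.Ltheta) {V : T} (hV : V ∈ S.Dtheta) :
    S.g (S.nablaAmb X ((S.P Z, 0) : T × N)) ((V, 0) : T × N)
      = S.g (0, S.h X V) (0, S.F Z) - S.g (0, S.h X Z) (0, S.F V) := by
  have hXD := S.Lperp_sub X hX
  have hZD := S.Ltheta_sub Z hZ
  have hsplit : S.g (S.nablaAmb X (S.J ((Z, 0) : T × N))) ((V, 0) : T × N)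
      = S.g (S.nablaAmb X ((S.P Z, 0) : T × N)) ((V, 0) : T × N)
        + S.g (S.nablaAmb X ((0, S.F Z) : T × N)) ((V, 0) : T × N) := by
    rw [← S.g_add_left, ← S.nablaAmb_add]
    have : ((S.P Z, 0) : T × N) + ((0, S.F Z) : T × N) = S.J ((Z, 0) : T × N) := by
      rw [Prod.mk_add_mk, add_zero, zero_add]
      exact Prod.ext rfl rfl
    rw [this]
  have hb : S.g (S.nablaAmb X ((0, S.F Z) : T × N)) ((V, 0) : T × N)
      = - S.g (0, S.h X V) (0, S.F Z) := by
    have z : S.g ((0, S.F Z) : T × N) ((V, 0) : T × N) = 0 := by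
      rw [S.g_symm]; exact S.g_tangent_normal V (S.F Z)
    have m := S.nablaAmb_metric X ((0, S.F Z) : T × N) ((V, 0) : T × N)
    rw [z, S.D_zero] at m
    have e : S.g ((0, S.F Z) : T × N) (S.nablaAmb X ((V, 0) : T × N))
        = S.g (0, S.h X V) (0, S.F Z) := by
      rw [S.g_snd, S.g_symm]
      rfl
    rw [e] at m
    linear_combination -m
  have lp := S.lck_pair X ((Z, 0) : T × N) ((V, 0) : T × N)
  have c1 : S.g ((X, 0) : T × N) ((V, 0) : T × N) = 0 := S.orthogonal X hXD V hV
  have c2 : S.g (S.J ((X, 0) : T × N)) ((V, 0) : T × N) = 0 := S.g_JX_tan hXD V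
  have c3 : S.g ((X, 0) : T × N) ((Z, 0) : T × N) = 0 := S.orthogonal X hXD Z hZD
  have c4 : S.g (S.J ((X, 0) : T × N)) ((Z, 0) : T × N) = 0 := S.g_JX_tan hXD Z
  have e3 : S.g (S.J (S.nablaAmb X ((Z, 0) : T × N))) ((V, 0) : T × N)
      = - S.g (0, S.h X Z) (0, S.F V) := by
    rw [S.gJ_skew, S.warp_nab_XZ hX hZ, S.g_pair]
    show -(S.g (S.D Z S.lnlam • X, 0) (S.P V, 0) + S.g (0, S.h X Z) (0, S.F V)) = _
    rw [S.g_smul_fst]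
    rw [show S.g ((X, 0) : T × N) ((S.P V, 0) : T × N) = 0 from
      S.orthogonal X hXD (S.P V) (S.P_mem_Dtheta V hV)]
    ring
  rw [c1, c2, c3, c4, e3] at lp
  linear_combination lp - hsplit - hb

lemma Lc {X Z W : T} (hX : X ∈ S.Lperp) (hZ : Z ∈ S.Ltheta) (hW : W ∈ S.Ltheta) :
    S.g S.B ((X, 0) : T × N) * S.g ((Z, 0) : T × N) ((W, 0) : T × N) = 0 := by
  have hXD := S.Lperp_sub X hX
  have hZD := S.Ltheta_sub Z hZ
  have hWD := S.Ltheta_sub W hW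
  have hPZ : S.P Z ∈ S.Dtheta := S.P_mem_Dtheta Z hZD
  have hPW : S.P W ∈ S.Dtheta := S.P_mem_Dtheta W hWD
  have pp : ∀ U, U ∈ S.Dtheta →
      S.P (S.P U) = (-(algebraMap ℝ A (Real.cos S.θ ^ 2))) • U := fun U hU => S.slant U hU
  -- way 1 value of s = g(PZ, PW)
  have sval : S.g ((S.P Z, 0) : T × N) ((S.P W, 0) : T × N)
      = algebraMap ℝ A (Real.cos S.θ ^ 2) * S.g ((Z, 0) : T × N) ((W, 0) : T × N) := by
    have h1 : S.g (S.J ((Z, 0) : T × N)) ((S.P W, 0) : T × N)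
        = S.g ((S.P Z, 0) : T × N) ((S.P W, 0) : T × N) := by
      rw [S.g_pair]
      show S.g (S.P Z, 0) (S.P W, 0) + S.g ((0 : T), S.F Z) ((0 : T), (0 : N)) = _
      rw [show ((0 : T), (0 : N)) = (0 : T × N) from rfl, S.g_zero_right, add_zero]
    have h2 : S.g (S.J ((Z, 0) : T × N)) ((S.P W, 0) : T × N)
        = algebraMap ℝ A (Real.cos S.θ ^ 2) * S.g ((Z, 0) : T × N) ((W, 0) : T × N) := by
      rw [S.gJ_skew, S.g_fst]
      show -(S.g ((Z, 0) : T × N) (S.P (S.P W), 0)) = _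
      rw [pp W hWD]
      rw [show ((((-(algebraMap ℝ A (Real.cos S.θ ^ 2))) • W : T), (0 : N)) : T × N)
          = (-(algebraMap ℝ A (Real.cos S.θ ^ 2))) • ((W, 0) : T × N) from by
        rw [Prod.smul_mk, smul_zero], S.g_smul_right]
      ring
    rw [← h1, h2]
  -- D_X of g(Z,W) vanishes
  have dZW : S.D X (S.g ((Z, 0) : T × N) ((W, 0) : T × N)) = 0 := by
    have m := S.nablaAmb_metric X ((Z, 0) : T × N) ((W, 0) : T × N)
    rw [S.warp_nab_XZ hX hZ, S.warp_nab_XZ hX hW] at m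
    have t1 : S.g ((S.D Z S.lnlam • X, S.h X Z) : T × N) ((W, 0) : T × N) = 0 := by
      rw [S.g_pair]
      show S.g (S.D Z S.lnlam • X, 0) (W, 0) + S.g ((0 : T), S.h X Z) ((0 : T), (0 : N)) = 0
      rw [S.g_smul_fst, S.orthogonal X hXD W hWD,
        show ((0 : T), (0 : N)) = (0 : T × N) from rfl, S.g_zero_right]
      ring
    have t2 : S.g ((Z, 0) : T × N) ((S.D W S.lnlam • X, S.h X W) : T × N) = 0 := by
      rw [S.g_symm, S.g_pair]
      show S.g (S.D W S.lnlam • X, 0) (Z, 0) + S.g ((0 : T), S.h X W) ((0 : T), (0 : N)) = 0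
      rw [S.g_smul_fst, S.orthogonal X hXD Z hZD,
        show ((0 : T), (0 : N)) = (0 : T × N) from rfl, S.g_zero_right]
      ring
    rw [t1, t2] at m
    simpa using m
  have ds0 : S.D X (S.g ((S.P Z, 0) : T × N) ((S.P W, 0) : T × N)) = 0 := by
    rw [sval, S.D_algmul, dZW, mul_zero]
  have m2 := S.nablaAmb_metric X ((S.P Z, 0) : T × N) ((S.P W, 0) : T × N)
  rw [ds0] at m2
  have l1 := S.L1 hX hZ hPW
  have l2 := S.L1 hX hW hPZ
  have sym2 : S.g ((S.P Z, 0) : T × N) (S.nablaAmb X ((S.P W, 0) : T × N))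
      = S.g (S.nablaAmb X ((S.P W, 0) : T × N)) ((S.P Z, 0) : T × N) := S.g_symm _ _
  have b1 := S.eqB' hX hPW hZ
  have b2 := S.eqB' hX hPZ hW
  have j1 : S.g (S.J ((S.P W, 0) : T × N)) ((Z, 0) : T × N)
      = -(algebraMap ℝ A (Real.cos S.θ ^ 2)) * S.g ((W, 0) : T × N) ((Z, 0) : T × N) := by
    rw [S.g_pair]
    show S.g (S.P (S.P W), 0) (Z, 0) + S.g ((0 : T), S.F (S.P W)) ((0 : T), (0 : N)) = _
    rw [pp W hWD,
      show ((((-(algebraMap ℝ A (Real.cos S.θ ^ 2))) • W : T), (0 : N)) : T × N)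
          = (-(algebraMap ℝ A (Real.cos S.θ ^ 2))) • ((W, 0) : T × N) from by
        rw [Prod.smul_mk, smul_zero], S.g_smul_left,
      show ((0 : T), (0 : N)) = (0 : T × N) from rfl, S.g_zero_right, add_zero]
  have j2 : S.g (S.J ((S.P Z, 0) : T × N)) ((W, 0) : T × N)
      = -(algebraMap ℝ A (Real.cos S.θ ^ 2)) * S.g ((Z, 0) : T × N) ((W, 0) : T × N) := by
    rw [S.g_pair]
    show S.g (S.P (S.P Z), 0) (W, 0) + S.g ((0 : T), S.F (S.P Z)) ((0 : T), (0 : N)) = _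
    rw [pp Z hZD,
      show ((((-(algebraMap ℝ A (Real.cos S.θ ^ 2))) • Z : T), (0 : N)) : T × N)
          = (-(algebraMap ℝ A (Real.cos S.θ ^ 2))) • ((Z, 0) : T × N) from by
        rw [Prod.smul_mk, smul_zero], S.g_smul_left,
      show ((0 : T), (0 : N)) = (0 : T × N) from rfl, S.g_zero_right, add_zero]
  have gsym : S.g ((W, 0) : T × N) ((Z, 0) : T × N)
      = S.g ((Z, 0) : T × N) ((W, 0) : T × N) := S.g_symm _ _
  have final : algebraMap ℝ A (Real.cos S.θ ^ 2)
        * (S.g S.B ((X, 0) : T × N) * S.g ((Z, 0) : T × N) ((W, 0) : T × N))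
      + algebraMap ℝ A (Real.cos S.θ ^ 2)
        * (S.g S.B ((X, 0) : T × N) * S.g ((Z, 0) : T × N) ((W, 0) : T × N)) = 0 := by
    rw [j1, gsym] at b1
    rw [j2] at b2
    rw [sym2, l1, l2, b1, b2] at m2
    linear_combination -m2
  have hcos : (0 : ℝ) < Real.cos S.θ := by
    apply Real.cos_pos_of_mem_Ioo
    constructor
    · have := Real.pi_pos
      have := S.theta_pos
      linarith
    · exact S.theta_lt_half_pi
  have hne : (2 * Real.cos S.θ ^ 2 : ℝ) ≠ 0 := by positivity
  have e : algebraMap ℝ A ((2 * Real.cos S.θ ^ 2)⁻¹)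
      * (algebraMap ℝ A (Real.cos S.θ ^ 2) + algebraMap ℝ A (Real.cos S.θ ^ 2)) = 1 := by
    rw [← map_add, ← map_mul,
      show ((2 * Real.cos S.θ ^ 2)⁻¹ * (Real.cos S.θ ^ 2 + Real.cos S.θ ^ 2) : ℝ) = 1 from by
        rw [← two_mul]; exact inv_mul_cancel₀ hne, map_one]
  linear_combination algebraMap ℝ A ((2 * Real.cos S.θ ^ 2)⁻¹) * final
    - (S.g S.B ((X, 0) : T × N) * S.g ((Z, 0) : T × N) ((W, 0) : T × N)) * e

lemma Lc' {X : T} (hX : X ∈ S.Lperp) {U W : T} (hU : U ∈ S.Dtheta) (hW : W ∈ S.Ltheta) :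
    S.g S.B ((X, 0) : T × N) * S.g ((U, 0) : T × N) ((W, 0) : T × N) = 0 := by
  rw [← S.Ltheta_span] at hU
  induction hU using Submodule.span_induction with
  | mem x hx => exact S.Lc hX hx hW
  | zero =>
      rw [show ((0 : T), (0 : N)) = (0 : T × N) from rfl, S.g_zero_left, mul_zero]
  | add x y hx hy ihx ihy =>
      rw [show ((x + y, 0) : T × N) = (x, 0) + (y, 0) from by
        rw [Prod.mk_add_mk, add_zero], S.g_add_left]
      linear_combination ihx + ihy
  | smul a x hx ih =>
      rw [show ((a • x, 0) : T × N) = a • ((x, 0) : T × N) from by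
        rw [Prod.smul_mk, smul_zero], S.g_smul_left]
      linear_combination a * ih

end WarpedProductHemiSlant


/-- Let `M = Mθ ×_λ M⊥` be a warped product hemi-slant submanifold of an lcK manifold. Then for all `X ∈ L(M⊥)` and `Z, W ∈ L(Mθ)`, `g(h(Z,W), JX) = g(h(X,Z), FW) + (1/2) g(Z,W) g(JB, X)`. -/
theorem WarpedProductHemiSlant.g_h_theta_theta_J {A : Type*} [CommRing A] [Algebra ℝ A]
    {T : Type*} [AddCommGroup T] [Module A T]
    {N : Type*} [AddCommGroup N] [Module A N]
    (S : WarpedProductHemiSlant A T N) {X Z W : T}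
    (hX : X ∈ S.Lperp) (hZ : Z ∈ S.Ltheta) (hW : W ∈ S.Ltheta) :
    S.g (0, S.h Z W) (S.J (X, 0))
      = S.g (0, S.h X Z) (0, S.F W)
        + algebraMap ℝ A (1 / 2) * S.g (Z, 0) (W, 0) * S.g (S.J S.B) (X, 0) := by
  have hZD := S.Ltheta_sub Z hZ
  have hWD := S.Ltheta_sub W hW
  have ha := S.eqA hX hZ hWD
  have hsym : S.h Z X = S.h X Z := S.h_symm Z X
  rw [hsym] at ha
  have hq : S.g (S.J ((Z, 0) : T × N)) ((W, 0) : T × N)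
      = S.g ((S.P Z, 0) : T × N) ((W, 0) : T × N) := by
    rw [S.g_pair]
    show S.g (S.P Z, 0) (W, 0) + S.g ((0 : T), S.F Z) ((0 : T), (0 : N)) = _
    rw [show ((0 : T), (0 : N)) = (0 : T × N) from rfl, S.g_zero_right, add_zero]
  have h0 := S.Lc' hX (S.P_mem_Dtheta Z hZD) hW
  have h0' : S.g S.B ((X, 0) : T × N) * S.g (S.J ((Z, 0) : T × N)) ((W, 0) : T × N) = 0 := by
    rw [hq]; exact h0
  linear_combination ha + algebraMap ℝ A (1 / 2) * h0'
end
end
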